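/- arXiv:1108.6113 — 3 statements merged into one kernel-verified Lean document; each statement's English description precedes it below -/
import Mathlib

section
/- Let n ≥ 4 be even. There exist two directed graphs G₁ and G₂ on n vertices with identical in-degree sequences and identical out-degree sequences (namely n/2 + 1 vertices of degree 1 and n/2 − 1 vertices of degree 2, for both in- and out-degrees), all edges labeled +1, such that R_new(G₁) = 0 while R_new(G₂) > 0. Hence the redundancy measure R_new is not determined by the degree sequence. -/
/-!
Write `n = 2m`. Both graphs are the cycle `0 → 1 → ⋯ → m → 0` with an ear through a fresh
vertex at each `1 ≤ i < m`; in `G₁` the ear returns to `i`, in `G₂` it lands on `i + 1`. This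
moves one in-edge per ear but leaves the degree counts unchanged. In `G₂` the ear at `1` bypasses
the edge `1 → 2`, which can therefore be dropped. In `G₁` every edge `(u, t)` leaves a set that
contains `u` and is closed under all other edges, so it is the only route from `u` to `t` and every
valid subset keeps it.
-/

inductive Reach {V : Type*} (E : Finset (V × V)) (w : V × V → ℤ) : V → V → ℤ → Prop
  | refl (u : V) : Reach E w u u 1
  | step {u v t : V} {x : ℤ} : Reach E w u v x → (v, t) ∈ E → Reach E w u t (x * w (v, t))

def BTRValid {V : Type*} (E : Finset (V × V)) (w : V × V → ℤ) (E' : Finset (V × V)) : Prop :=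
  E' ⊆ E ∧ ∀ a b : V, ∀ x : ℤ, Reach E' w a b x ↔ Reach E w a b x

def inDeg {n : ℕ} (E : Finset (Fin n × Fin n)) (v : Fin n) : ℕ :=
  (E.filter (fun e => e.2 = v)).card

def outDeg {n : ℕ} (E : Finset (Fin n × Fin n)) (v : Fin n) : ℕ :=
  (E.filter (fun e => e.1 = v)).card

/-- A directed graph on `Fin n` whose degree sequence consists of `n/2 + 1` vertices of
degree `1` and `n/2 - 1` vertices of degree `2`, both for in-degrees and out-degrees. -/
def DegSeqOK (n : ℕ) (E : Finset (Fin n × Fin n)) : Prop :=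
  ((Finset.univ.filter (fun v => inDeg E v = 1)).card = n / 2 + 1) ∧
  ((Finset.univ.filter (fun v => inDeg E v = 2)).card = n / 2 - 1) ∧
  ((Finset.univ.filter (fun v => outDeg E v = 1)).card = n / 2 + 1) ∧
  ((Finset.univ.filter (fun v => outDeg E v = 2)).card = n / 2 - 1)

open Finset

namespace Reach

variable {V : Type*} {E E' : Finset (V × V)} {w : V × V → ℤ}

theorem mono (hs : E' ⊆ E) {a b : V} {x : ℤ} (h : Reach E' w a b x) : Reach E w a b x := by
  induction h with
  | refl => exact .refl _
  | step _ he ih => exact .step ih (hs he)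

theorem trans {a b c : V} {x y : ℤ} (h₁ : Reach E w a b x) (h₂ : Reach E w b c y) :
    Reach E w a c (x * y) := by
  induction h₂ with
  | refl => simpa using h₁
  | step _ he ih => rw [← mul_assoc]; exact .step ih he

theorem of_closed {S : V → Prop} (hS : ∀ a b, (a, b) ∈ E → S a → S b) {a b : V} {x : ℤ}
    (h : Reach E w a b x) (ha : S a) : S b := by
  induction h with
  | refl => exact ha
  | step _ he ih => exact hS _ _ he ih

end Reach

section BTRValid

variable {V : Type*} {E E' : Finset (V × V)} {w : V × V → ℤ}

theorem mem_of_btrValid {u t : V} (hE' : BTRValid E w E') (he : (u, t) ∈ E) (S : V → Prop)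
    (hu : S u) (ht : ¬ S t) (hS : ∀ a b, (a, b) ∈ E → (a, b) ≠ (u, t) → S a → S b) :
    (u, t) ∈ E' := by
  by_contra hne
  have hreach : Reach E' w u t (1 * w (u, t)) := (hE'.2 _ _ _).2 (.step (.refl u) he)
  refine ht (hreach.of_closed (fun a b hab => hS a b (hE'.1 hab) ?_) hu)
  intro heq
  exact hne (heq ▸ hab)

theorem eq_of_btrValid_of_forall_closed
    (hcut : ∀ u t, (u, t) ∈ E → ∃ S : V → Prop,
      S u ∧ ¬ S t ∧ ∀ a b, (a, b) ∈ E → (a, b) ≠ (u, t) → S a → S b)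
    (hE' : BTRValid E w E') : E' = E := by
  refine hE'.1.antisymm fun ⟨u, t⟩ he => ?_
  obtain ⟨S, hu, ht, hS⟩ := hcut u t he
  exact mem_of_btrValid hE' he S hu ht hS

theorem btrValid_erase [DecidableEq V] {u t : V} (he : (u, t) ∈ E)
    (hbypass : Reach (E.erase (u, t)) w u t (w (u, t))) : BTRValid E w (E.erase (u, t)) := by
  refine ⟨erase_subset _ _, fun a b x => ⟨Reach.mono (erase_subset _ _), fun h => ?_⟩⟩
  induction h with
  | refl => exact .refl _
  | @step v s _ _ hvs ih =>
    by_cases hvs' : (v, s) = (u, t)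
    · obtain ⟨rfl, rfl⟩ := Prod.mk.inj hvs'
      exact ih.trans hbypass
    · exact .step ih (mem_erase.2 ⟨hvs', hvs⟩)

end BTRValid

section Degrees

variable {n : ℕ}

theorem inDeg_filter_univ (R : Fin n → Fin n → Prop) [DecidableRel R] (v : Fin n) :
    inDeg (univ.filter fun e : Fin n × Fin n => R e.1 e.2) v = #{u | R u v} := by
  rw [inDeg, filter_filter]
  refine card_nbij' Prod.fst (·, v) ?_ ?_ ?_ ?_ <;> rintro ⟨a, b⟩ <;> aesop

theorem outDeg_filter_univ (R : Fin n → Fin n → Prop) [DecidableRel R] (v : Fin n) :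
    outDeg (univ.filter fun e : Fin n × Fin n => R e.1 e.2) v = #{u | R v u} := by
  rw [outDeg, filter_filter]
  refine card_nbij' Prod.snd (v, ·) ?_ ?_ ?_ ?_ <;> rintro ⟨a, b⟩ <;> aesop

theorem card_filter_eq_one_of_val {P : Fin n → Prop} [DecidablePred P] {a : ℕ} (ha : a < n)
    (h : ∀ x : Fin n, P x ↔ x.val = a) : #{x | P x} = 1 :=
  card_eq_one.2 ⟨⟨a, ha⟩, by ext x; simp [Fin.ext_iff, h x]⟩

theorem card_filter_eq_two_of_val {P : Fin n → Prop} [DecidablePred P] {a b : ℕ} (ha : a < n)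
    (hb : b < n) (hab : a ≠ b) (h : ∀ x : Fin n, P x ↔ x.val = a ∨ x.val = b) :
    #{x | P x} = 2 :=
  card_eq_two.2 ⟨⟨a, ha⟩, ⟨b, hb⟩, by simpa [Fin.ext_iff], by ext x; simp [Fin.ext_iff, h x]⟩

theorem card_filter_val_mem_Ico {a b : ℕ} (hb : b ≤ n) :
    #{x : Fin n | a ≤ x.val ∧ x.val < b} = b - a := by
  rw [← card_map Fin.valEmbedding, ← Nat.card_Ico]
  congr 1
  ext x
  simp only [mem_map, mem_filter, mem_univ, true_and, Fin.valEmbedding_apply, mem_Ico]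
  constructor
  · rintro ⟨y, hy, rfl⟩
    exact hy
  · exact fun hx => ⟨⟨x, by omega⟩, hx, rfl⟩

theorem card_filter_eq_two_and_eq_one_of_ite {a b : ℕ} (hb : b ≤ n) (d : Fin n → ℕ)
    (hd : ∀ v : Fin n, d v = if a ≤ v.val ∧ v.val < b then 2 else 1) :
    #{v | d v = 2} = b - a ∧ #{v | d v = 1} = n - (b - a) := by
  have htwo : #{v | d v = 2} = #{v : Fin n | a ≤ v.val ∧ v.val < b} := by
    congr 1; ext v; simp only [mem_filter, hd]; split_ifs with h <;> simp [h]
  have hone : #{v | d v = 1} = #{v : Fin n | ¬(a ≤ v.val ∧ v.val < b)} := by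
    congr 1; ext v; simp only [mem_filter, hd]; split_ifs with h <;> simp [h]
  rw [htwo, hone, filter_not, card_sdiff_of_subset (filter_subset _ _), card_univ,
    Fintype.card_fin, card_filter_val_mem_Ico hb]
  exact ⟨rfl, rfl⟩

end Degrees

/-- The cycle `0 → 1 → ⋯ → m → 0` with an ear `i → m + i → i + k` at every `1 ≤ i < m`. -/
def EarAdj (m k a b : ℕ) : Prop :=
  (a < m ∧ b = a + 1) ∨ (a = m ∧ b = 0) ∨ (1 ≤ a ∧ a < m ∧ b = m + a) ∨ (m < a ∧ b + m = a + k)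

instance (m k : ℕ) : DecidableRel (EarAdj m k) := fun _ _ => by unfold EarAdj; infer_instance

def earGraph (m k : ℕ) : Finset (Fin (2 * m) × Fin (2 * m)) :=
  univ.filter fun e => EarAdj m k e.1 e.2

section EarGraph

variable {m k : ℕ}

@[simp]
theorem mem_earGraph {a b : Fin (2 * m)} : (a, b) ∈ earGraph m k ↔ EarAdj m k a b := by
  simp [earGraph]

theorem outDeg_earGraph (hm : 2 ≤ m) (hk : k ≤ 1) (v : Fin (2 * m)) :
    outDeg (earGraph m k) v = if 1 ≤ v.val ∧ v.val < m then 2 else 1 := by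
  rw [earGraph, outDeg_filter_univ fun a b : Fin (2 * m) => EarAdj m k a b]
  have hv := v.isLt
  split_ifs with h
  · exact card_filter_eq_two_of_val (a := v.val + 1) (b := m + v.val) (by omega) (by omega)
      (by omega) fun x => by unfold EarAdj; omega
  · obtain h0 | hcyc | hear : v.val = 0 ∨ v.val = m ∨ m < v.val := by omega
    · exact card_filter_eq_one_of_val (a := 1) (by omega) fun x => by unfold EarAdj; omega
    · exact card_filter_eq_one_of_val (a := 0) (by omega) fun x => by unfold EarAdj; omega
    · exact card_filter_eq_one_of_val (a := v.val + k - m) (by omega) fun x => by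
        unfold EarAdj; omega

theorem inDeg_earGraph (hm : 2 ≤ m) (hk : k ≤ 1) (v : Fin (2 * m)) :
    inDeg (earGraph m k) v = if k + 1 ≤ v.val ∧ v.val < m + k then 2 else 1 := by
  rw [earGraph, inDeg_filter_univ fun a b : Fin (2 * m) => EarAdj m k a b]
  have hv := v.isLt
  split_ifs with h
  · exact card_filter_eq_two_of_val (a := v.val - 1) (b := m + v.val - k) (by omega) (by omega)
      (by omega) fun x => by unfold EarAdj; omega
  · obtain h0 | hcyc | hear : v.val = 0 ∨ (1 ≤ v.val ∧ v.val ≤ m) ∨ m < v.val := by omega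
    · exact card_filter_eq_one_of_val (a := m) (by omega) fun x => by unfold EarAdj; omega
    · exact card_filter_eq_one_of_val (a := v.val - 1) (by omega) fun x => by unfold EarAdj; omega
    · exact card_filter_eq_one_of_val (a := v.val - m) (by omega) fun x => by unfold EarAdj; omega

theorem degSeqOK_earGraph (hm : 2 ≤ m) (hk : k ≤ 1) : DegSeqOK (2 * m) (earGraph m k) := by
  obtain ⟨hin₂, hin₁⟩ :=
    card_filter_eq_two_and_eq_one_of_ite (by omega) _ (inDeg_earGraph hm hk)
  obtain ⟨hout₂, hout₁⟩ :=
    card_filter_eq_two_and_eq_one_of_ite (by omega) _ (outDeg_earGraph hm hk)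
  refine ⟨?_, ?_, ?_, ?_⟩ <;> omega

theorem eq_earGraph_zero_of_btrValid (hm : 2 ≤ m) {w : Fin (2 * m) × Fin (2 * m) → ℤ}
    {E' : Finset (Fin (2 * m) × Fin (2 * m))} (hE' : BTRValid (earGraph m 0) w E') :
    E' = earGraph m 0 := by
  refine eq_of_btrValid_of_forall_closed (fun u t he => ?_) hE'
  simp only [mem_earGraph, EarAdj] at he
  by_cases hear : 1 ≤ u.val ∧ u.val < m ∧ t.val = m + u.val
  · refine ⟨fun x => x ≠ t, by rintro rfl; omega, not_not_intro rfl, ?_⟩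
    intro a b hab hne _
    have := a.isLt
    simp only [mem_earGraph, EarAdj, ne_eq, Prod.mk.injEq, Fin.ext_iff] at hab hne ⊢
    omega
  · refine ⟨fun x => x.val = u.val ∨ x.val = m + u.val, .inl rfl, by beta_reduce; omega, ?_⟩
    intro a b hab hne ha
    have := a.isLt
    have := b.isLt
    simp only [mem_earGraph, EarAdj, ne_eq, Prod.mk.injEq, Fin.ext_iff] at hab hne
    omega

theorem exists_btrValid_card_lt_earGraph_one (hm : 2 ≤ m) :
    ∃ E', BTRValid (earGraph m 1) (fun _ => 1) E' ∧ E'.card < (earGraph m 1).card := by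
  let x₁ : Fin (2 * m) := ⟨1, by omega⟩
  let x₂ : Fin (2 * m) := ⟨2, by omega⟩
  let y₁ : Fin (2 * m) := ⟨m + 1, by omega⟩
  have hchord : (x₁, x₂) ∈ earGraph m 1 := by
    simp only [mem_earGraph, EarAdj, x₁, x₂, and_true]
    omega
  have hup : (x₁, y₁) ∈ (earGraph m 1).erase (x₁, x₂) := by
    simp only [mem_erase, ne_eq, Prod.mk.injEq, Fin.ext_iff, mem_earGraph, EarAdj, x₁, x₂, y₁,
      and_true]
    omega
  have hdown : (y₁, x₂) ∈ (earGraph m 1).erase (x₁, x₂) := by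
    simp only [mem_erase, ne_eq, Prod.mk.injEq, Fin.ext_iff, mem_earGraph, EarAdj, x₁, x₂, y₁,
      and_true]
    omega
  refine ⟨_, btrValid_erase hchord ?_, card_erase_lt_of_mem hchord⟩
  simpa using ((Reach.refl (w := fun _ => 1) x₁).step hup).step hdown

end EarGraph

/-- For every even `n ≥ 4` there are two digraphs on `n` vertices (all edges labeled `+1`)
with identical in- and out-degree sequences (namely `n/2+1` vertices of degree 1 and
`n/2-1` vertices of degree 2) such that `R_new(G₁) = 0` (no proper valid BTR solution)
while `R_new(G₂) > 0` (some strictly smaller valid BTR solution exists). Hence `R_new`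
is not determined by the degree sequence. -/
theorem stmt_5 (n : ℕ) (hn : 4 ≤ n) (heven : Even n) :
    ∃ E₁ E₂ : Finset (Fin n × Fin n),
      DegSeqOK n E₁ ∧ DegSeqOK n E₂ ∧
      (∀ E' : Finset (Fin n × Fin n),
        BTRValid E₁ (fun _ => (1 : ℤ)) E' → E' = E₁) ∧
      (∃ E' : Finset (Fin n × Fin n),
        BTRValid E₂ (fun _ => (1 : ℤ)) E' ∧ E'.card < E₂.card) := by
  obtain ⟨m, rfl⟩ := heven.two_dvd
  have hm : 2 ≤ m := by omega
  exact ⟨earGraph m 0, earGraph m 1, degSeqOK_earGraph hm zero_le_one,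
    degSeqOK_earGraph hm le_rfl, fun _ => eq_earGraph_zero_of_btrValid hm,
    exists_btrValid_card_lt_earGraph_one hm⟩
end

section
/- Let G = (V, E, w) be a finite labeled directed graph with w : E → {−1, +1}. There exists a vertex labeling L : V → {−1, +1} making every edge consistent (i.e., w(u,v) = L(u)·L(v) for all edges (u,v)) if and only if every closed undirected chain in G has parity +1, where a closed undirected chain is a cycle in the underlying undirected graph (ignoring edge directions) and its parity is the product of the labels of its edges. -/
/-!
If `L` is a consistent `±1`-labeling, the parity of every chain from `u` to `v` is `L u * L v`,
so closed chains have parity `1`. Conversely, if closed chains have parity `1`, then any two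
chains with the same endpoints have the same parity (concatenate one with the reverse of the
other), so labeling each vertex by the parity of a chain from a fixed root of its connected
component is well defined, and it is consistent.
-/

/-- Undirected chains with parity: walks in the underlying undirected graph (edges may be
traversed in either direction), whose parity is the product of the labels of the edges
used; the empty chain has parity `1`. -/
inductive UChain {V : Type*} (E : Finset (V × V)) (w : V × V → ℤ) : V → V → ℤ → Prop
  | refl (u : V) : UChain E w u u 1
  | fwd {u v t : V} {x : ℤ} : UChain E w u v x → (v, t) ∈ E → UChain E w u t (x * w (v, t))
  | bwd {u v t : V} {x : ℤ} : UChain E w u v x → (t, v) ∈ E → UChain E w u t (x * w (t, v))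

namespace UChain

variable {V : Type*} {E : Finset (V × V)} {w : V × V → ℤ} {u v t : V} {x y : ℤ}

lemma trans (h₁ : UChain E w u v x) (h₂ : UChain E w v t y) : UChain E w u t (x * y) := by
  induction h₂ with
  | refl => simpa using h₁
  | fwd _ he ih => simpa only [mul_assoc] using ih.fwd he
  | bwd _ he ih => simpa only [mul_assoc] using ih.bwd he

lemma symm (h : UChain E w u v x) : UChain E w v u x := by
  induction h with
  | refl => exact .refl _
  | fwd _ he ih => simpa only [one_mul, mul_comm] using ((refl _).bwd he).trans ih
  | bwd _ he ih => simpa only [one_mul, mul_comm] using ((refl _).fwd he).trans ih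

lemma parity_eq_mul_labels {L : V → ℤ} (hL : ∀ v, L v * L v = 1)
    (hLE : ∀ e ∈ E, w e = L e.1 * L e.2) (h : UChain E w u v x) : x = L u * L v := by
  induction h with
  | refl => exact (hL _).symm
  | @fwd v t _ _ he ih => linear_combination w (v, t) * ih + L u * L v * hLE _ he + L u * L t * hL v
  | @bwd v t _ _ he ih => linear_combination w (t, v) * ih + L u * L v * hLE _ he + L u * L t * hL v

variable (hc : ∀ u : V, ∀ x : ℤ, UChain E w u u x → x = 1)
include hc

lemma parity_mul_self (h : UChain E w u v x) : x * x = 1 :=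
  hc u _ (h.trans h.symm)

lemma parity_unique (h₁ : UChain E w u v x) (h₂ : UChain E w u v y) : x = y :=
  calc x = x * y * y := by rw [mul_assoc, parity_mul_self hc h₂, mul_one]
    _ = y := by rw [hc u _ (h₁.trans h₂.symm), one_mul]

end UChain

section Potential

variable {V : Type*} (E : Finset (V × V)) (w : V × V → ℤ)

def chainSetoid : Setoid V where
  r a b := ∃ x, UChain E w a b x
  iseqv := ⟨fun a => ⟨1, .refl a⟩, fun ⟨x, h⟩ => ⟨x, h.symm⟩,
    fun ⟨x, h₁⟩ ⟨y, h₂⟩ => ⟨x * y, h₁.trans h₂⟩⟩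

noncomputable abbrev root (v : V) : V := (Quotient.mk (chainSetoid E w) v).out

lemma exists_chain_root (v : V) : ∃ x, UChain E w (root E w v) v x :=
  Quotient.mk_out (s := chainSetoid E w) v

noncomputable def potential (v : V) : ℤ := (exists_chain_root E w v).choose

lemma chain_potential (v : V) : UChain E w (root E w v) v (potential E w v) :=
  (exists_chain_root E w v).choose_spec

variable {E w} (hc : ∀ u : V, ∀ x : ℤ, UChain E w u u x → x = 1)
include hc

lemma potential_mul_self (v : V) : potential E w v * potential E w v = 1 :=
  UChain.parity_mul_self hc (chain_potential E w v)

lemma weight_eq_potential_mul {e : V × V} (he : e ∈ E) :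
    w e = potential E w e.1 * potential E w e.2 := by
  obtain ⟨a, b⟩ := e
  have hroot : root E w a = root E w b :=
    congrArg Quotient.out (Quotient.sound ⟨1 * w (a, b), (UChain.refl a).fwd he⟩)
  have hchain : UChain E w (root E w b) b (potential E w a * w (a, b)) :=
    hroot ▸ (chain_potential E w a).fwd he
  have hb := UChain.parity_unique hc hchain (chain_potential E w b)
  calc w (a, b) = potential E w a * potential E w a * w (a, b) := by
        rw [potential_mul_self hc, one_mul]
    _ = potential E w a * potential E w b := by rw [mul_assoc, hb]

end Potential

theorem stmt_8_general {V : Type*} (E : Finset (V × V)) (w : V × V → ℤ) :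
    (∃ L : V → ℤ, (∀ v, L v = -1 ∨ L v = 1) ∧
        ∀ e ∈ E, w e = L e.1 * L e.2) ↔
      (∀ u : V, ∀ x : ℤ, UChain E w u u x → x = 1) := by
  constructor
  · rintro ⟨L, hL, hLE⟩ u x h
    have hL2 : ∀ v, L v * L v = 1 := fun v => by rcases hL v with h | h <;> simp [h]
    rw [h.parity_eq_mul_labels hL2 hLE, hL2]
  · intro hc
    exact ⟨potential E w, fun v => (mul_self_eq_one_iff.mp (potential_mul_self hc v)).symm,
      fun e he => weight_eq_potential_mul hc he⟩

/-- There exists a vertex labeling `L : V → {-1,+1}` making every edge consistent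
(`w(u,v) = L u * L v`) iff every closed undirected chain has parity `+1`. -/
theorem stmt_8 {V : Type*} [Fintype V] (E : Finset (V × V)) (w : V × V → ℤ)
    (hw : ∀ e ∈ E, w e = -1 ∨ w e = 1) :
    (∃ L : V → ℤ, (∀ v, L v = -1 ∨ L v = 1) ∧
        ∀ e ∈ E, w e = L e.1 * L e.2) ↔
      (∀ u : V, ∀ x : ℤ, UChain E w u u x → x = 1) :=
  stmt_8_general E w
end

section
/- There exists a finite labeled directed graph G with no negative directed cycles (every directed cycle has parity +1) and no incoherent feed-forward loops (for every pair of directed paths with the same endpoints, if one is a single edge and the other has length two, they have equal parity), yet G contains a closed undirected chain of parity −1 (hence the associated dynamical system is not monotone with respect to any orthant order). -/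
section

variable {V : Type*} {E : Finset (V × V)} {w : V × V → ℤ}

theorem Reach.lt_or_eq_and_eq_one {f : V → ℕ} (hf : ∀ e ∈ E, f e.1 < f e.2) {u v : V} {x : ℤ}
    (h : Reach E w u v x) : f u < f v ∨ (u = v ∧ x = 1) := by
  induction h with
  | refl => exact Or.inr ⟨rfl, rfl⟩
  | step _ hmem ih =>
    rcases ih with hlt | ⟨rfl, -⟩
    · exact Or.inl (hlt.trans (hf _ hmem))
    · exact Or.inl (hf _ hmem)

theorem Reach.eq_one_of_cycle {f : V → ℕ} (hf : ∀ e ∈ E, f e.1 < f e.2) {u : V} {x : ℤ}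
    (h : Reach E w u u x) : x = 1 :=
  ((h.lt_or_eq_and_eq_one hf).resolve_left (lt_irrefl _)).2

theorem not_triangle_of_graded {f : V → ℕ} (hf : ∀ e ∈ E, f e.2 = f e.1 + 1) {u v z : V}
    (huv : (u, v) ∈ E) (huz : (u, z) ∈ E) (hzv : (z, v) ∈ E) : False := by
  have h₁ : f v = f u + 1 := hf _ huv
  have h₂ : f z = f u + 1 := hf _ huz
  have h₃ : f v = f z + 1 := hf _ hzv
  omega

theorem UChain.of_square {u a b v : V} (hua : (u, a) ∈ E) (hav : (a, v) ∈ E)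
    (hub : (u, b) ∈ E) (hbv : (b, v) ∈ E) :
    UChain E w u u (w (u, a) * w (a, v) * w (b, v) * w (u, b)) := by
  simpa only [one_mul] using (((UChain.refl u).fwd hua).fwd hav |>.bwd hbv).bwd hub

end

def diamond : Finset (Fin 4 × Fin 4) := {(0, 1), (0, 2), (1, 3), (2, 3)}

def diamondSign (e : Fin 4 × Fin 4) : ℤ := if e = (2, 3) then -1 else 1

def diamondRank : Fin 4 → ℕ := ![0, 1, 1, 2]

theorem diamondRank_graded : ∀ e ∈ diamond, diamondRank e.2 = diamondRank e.1 + 1 := by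
  decide

/-- There is a finite labeled digraph with no negative directed cycles and no incoherent
feed-forward loops which nevertheless has a closed undirected chain of parity `-1`
(hence the associated system is not monotone with respect to any orthant order). -/
theorem stmt_10 :
    ∃ (n : ℕ) (E : Finset (Fin n × Fin n)) (w : Fin n × Fin n → ℤ),
      (∀ e ∈ E, w e = -1 ∨ w e = 1) ∧
      (∀ u : Fin n, ∀ x : ℤ, Reach E w u u x → x = 1) ∧
      (∀ u v z : Fin n, (u, v) ∈ E → (u, z) ∈ E → (z, v) ∈ E →
        w (u, v) = w (u, z) * w (z, v)) ∧
      (∃ u : Fin n, UChain E w u u (-1)) := by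
  have hlt : ∀ e ∈ diamond, diamondRank e.1 < diamondRank e.2 := by decide
  have hsquare : UChain diamond diamondSign 0 0 _ :=
    UChain.of_square (a := 1) (b := 2) (v := 3) (by decide) (by decide) (by decide) (by decide)
  refine ⟨4, diamond, diamondSign, by decide, fun _ _ h => h.eq_one_of_cycle hlt,
    fun _ _ _ huv huz hzv => (not_triangle_of_graded diamondRank_graded huv huz hzv).elim,
    ⟨0, ?_⟩⟩
  simpa [diamondSign] using hsquare
end
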